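/- There exists an absolute constant c > 0 with the following property. Let d, n ≥ 1 and k ≥ 1 be integers, R > 0, α ≥ 1, δ ∈ (0,1/2), and ε ∈ (0,R]. Let x_1,…,x_n lie in the closed ball B(0,R) ⊂ ℝ^d and let U ∈ [0,1]^{n×k} be a feasible membership matrix. Suppose m ≥ c·R⁴k^{4α}·ε^{−4}·log(2k/δ) and I_1,…,I_m are independent random indices, each uniformly distributed on {1,…,n}. Then Σ_{p=1}^m U_{I_p t₁}^α ≥ m/k^α > 0 for any t₁ maximizing j ↦ Σ_{p=1}^m U_{I_p j}^α over j ∈ [k], and with probability at least 1 − δ one additionally has Σ_{i=1}^n U_{i t₁}^α > 0 and ‖μ̂_{t₁} − μ_{t₁}‖₂ ≤ ε, where μ_j = (Σ_{i=1}^n U_{ij}^α x_i)/(Σ_{i=1}^n U_{ij}^α) and μ̂_j = (Σ_{p=1}^m U_{I_p j}^α x_{I_p})/(Σ_{p=1}^m U_{I_p j}^α). -/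

import Mathlib

/-!
Every row of `U` has `α`-power mass at least `k^(1-α)` (power-mean inequality), so by pigeonhole
the empirically largest cluster carries sample mass at least `m / k^α`.

For a fixed cluster `j`, the sample mean error is `‖∑ p, Y_j (I p)‖` divided by the sample mass,
where `Y_j i = U i j ^ α • (x i - μ_j)` has mean zero over `i` and norm at most `2R`. As a
function of the `m` independent uniform indices this norm has bounded differences `4R` and mean
at most `2R √m`, so McDiarmid's inequality bounds its tail. A union bound over the
`k` clusters shows that, with probability at least `1 - δ`, it is at most `ε m / k^α` for every
`j`, in particular for `t₁`.
-/

open scoped BigOperators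
open MeasureTheory ProbabilityTheory Finset Real

lemma Real.exp_le_one_add_add_sq {t : ℝ} (ht : t ≤ 1) : exp t ≤ 1 + t + t ^ 2 := by
  rcases le_or_gt t (-1) with h | h
  · nlinarith [exp_le_one_iff.2 (h.trans (by norm_num))]
  · have := abs_exp_sub_one_sub_id_le (abs_le.2 ⟨h.le, ht⟩)
    linarith [le_abs_self (exp t - 1 - t)]

def BoundedDifferences {ι α : Type*} [DecidableEq ι] (h : (ι → α) → ℝ) (B : ℝ) : Prop :=
  ∀ v i a, |h v - h (Function.update v i a)| ≤ B

lemma boundedDifferences_norm_sum {ι α E : Type*} [Fintype ι] [DecidableEq ι]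
    [SeminormedAddCommGroup E] {Y : α → E} {b : ℝ} (hY : ∀ a, ‖Y a‖ ≤ b) :
    BoundedDifferences (fun v : ι → α ↦ ‖∑ i, Y (v i)‖) (2 * b) := by
  intro v i a
  have hoff : ∑ j ∈ {i}ᶜ, Y (Function.update v i a j) = ∑ j ∈ {i}ᶜ, Y (v j) :=
    sum_congr rfl fun j hj ↦ by rw [Function.update_of_ne (by simpa using hj)]
  have hdiff : ∑ j, Y (v j) - ∑ j, Y (Function.update v i a j) = Y (v i) - Y a := by
    rw [Fintype.sum_eq_add_sum_compl i, Fintype.sum_eq_add_sum_compl i, hoff]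
    simp
  calc _ ≤ ‖Y (v i) - Y a‖ := hdiff ▸ abs_norm_sub_norm_le _ _
    _ ≤ 2 * b := by linarith [norm_sub_le (Y (v i)) (Y a), hY (v i), hY a]

section Expect

variable {α : Type*} [Fintype α]

lemma expect_fin_cons {m : ℕ} (f : (Fin (m + 1) → α) → ℝ) :
    𝔼 v, f v = 𝔼 w : Fin m → α, 𝔼 a, f (Fin.cons a w) := by
  rw [Fintype.expect_equiv (Fin.consEquiv fun _ ↦ α).symm f (fun aw ↦ f (Fin.cons aw.1 aw.2))
    (fun v ↦ by simp [Fin.consEquiv]), ← univ_product_univ, expect_product, expect_comm]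

variable [Nonempty α]

lemma abs_expect_sub_expect_le {f g : α → ℝ} {B : ℝ} (h : ∀ a, |f a - g a| ≤ B) :
    |𝔼 a, f a - 𝔼 a, g a| ≤ B := by
  rw [← expect_sub_distrib]
  exact (abs_expect_le _ _).trans (expect_le univ_nonempty fun a _ ↦ h a)

lemma abs_sub_expect_le {f : α → ℝ} {B : ℝ} (h : ∀ a b, |f a - f b| ≤ B) (a : α) :
    |f a - 𝔼 b, f b| ≤ B := by
  simpa using abs_expect_sub_expect_le (f := fun _ ↦ f a) (h a)

lemma expect_exp_mul_le_of_expect_eq_zero {Z : α → ℝ} {B l : ℝ} (hZ : 𝔼 a, Z a = 0)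
    (hZB : ∀ a, |Z a| ≤ B) (hl : 0 ≤ l) (hlB : l * B ≤ 1) :
    𝔼 a, exp (l * Z a) ≤ 1 + l ^ 2 * B ^ 2 := by
  have hpt (a : α) : exp (l * Z a) ≤ 1 + l * Z a + l ^ 2 * B ^ 2 := by
    have hlZ : |l * Z a| ≤ l * B := by
      rw [abs_mul, abs_of_nonneg hl]; exact mul_le_mul_of_nonneg_left (hZB a) hl
    have := sq_le_sq' (abs_le.1 hlZ).1 (abs_le.1 hlZ).2
    nlinarith [exp_le_one_add_add_sq ((le_abs_self _).trans (hlZ.trans hlB))]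
  calc 𝔼 a, exp (l * Z a) ≤ 𝔼 a, (1 + l * Z a + l ^ 2 * B ^ 2) := expect_le_expect fun a _ ↦ hpt a
    _ = 1 + l ^ 2 * B ^ 2 := by
      rw [expect_add_distrib, expect_add_distrib, ← mul_expect, hZ]; simp

end Expect

namespace BoundedDifferences

variable {α : Type*} [Fintype α] [Nonempty α]

section Cons

variable {m : ℕ} {h : (Fin (m + 1) → α) → ℝ} {B : ℝ}

lemma expect_cons (hh : BoundedDifferences h B) :
    BoundedDifferences (fun w : Fin m → α ↦ 𝔼 a, h (Fin.cons a w)) B := fun w p b ↦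
  abs_expect_sub_expect_le fun a ↦ by simpa [Fin.cons_update] using hh (Fin.cons a w) p.succ b

lemma abs_cons_sub_expect_le (hh : BoundedDifferences h B) (w : Fin m → α) (a : α) :
    |h (Fin.cons a w) - 𝔼 b, h (Fin.cons b w)| ≤ B :=
  abs_sub_expect_le (fun a b ↦ by simpa using hh (Fin.cons a w) 0 b) a

end Cons

variable {m : ℕ} {h : (Fin m → α) → ℝ} {B : ℝ}

/-- Peel off one coordinate at a time: this is the Doob-martingale step of McDiarmid's
inequality for the uniform measure on `Fin m → α`. -/
lemma expect_exp_mul_sub_expect_le {l : ℝ} (hh : BoundedDifferences h B) (hl : 0 ≤ l)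
    (hlB : l * B ≤ 1) : 𝔼 v, exp (l * (h v - 𝔼 w, h w)) ≤ (1 + l ^ 2 * B ^ 2) ^ m := by
  induction m with
  | zero => simp
  | succ m ih =>
    set h' : (Fin m → α) → ℝ := fun w ↦ 𝔼 a, h (Fin.cons a w)
    have hmean : 𝔼 v, h v = 𝔼 w, h' w := expect_fin_cons h
    have hstep (w : Fin m → α) :
        𝔼 a, exp (l * (h (Fin.cons a w) - h' w)) ≤ 1 + l ^ 2 * B ^ 2 :=
      expect_exp_mul_le_of_expect_eq_zero (by simp [expect_sub_distrib, h'])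
        (hh.abs_cons_sub_expect_le w) hl hlB
    calc 𝔼 v, exp (l * (h v - 𝔼 w, h w))
        = 𝔼 w, exp (l * (h' w - 𝔼 w, h' w)) * 𝔼 a, exp (l * (h (Fin.cons a w) - h' w)) := by
          rw [expect_fin_cons, hmean]
          refine expect_congr rfl fun w _ ↦ ?_
          rw [mul_expect]
          refine expect_congr rfl fun a _ ↦ ?_
          rw [← exp_add]; ring_nf
      _ ≤ 𝔼 w, exp (l * (h' w - 𝔼 w, h' w)) * (1 + l ^ 2 * B ^ 2) :=
          expect_le_expect fun w _ ↦ mul_le_mul_of_nonneg_left (hstep w) (exp_nonneg _)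
      _ ≤ (1 + l ^ 2 * B ^ 2) ^ (m + 1) := by
          rw [← expect_mul, pow_succ]
          exact mul_le_mul_of_nonneg_right (ih hh.expect_cons) (by positivity)

/-- McDiarmid's inequality for the uniform measure on `Fin m → α`, in counting form. -/
lemma card_upper_tail_le {t : ℝ} (hh : BoundedDifferences h B) (hB : 0 < B) (ht : 0 ≤ t)
    (htB : t ≤ 2 * m * B) :
    (#{v | 𝔼 w, h w + t ≤ h v} : ℝ) ≤ Fintype.card α ^ m * exp (-t ^ 2 / (4 * m * B ^ 2)) := by
  set l := t / (2 * m * B ^ 2)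
  have hl : 0 ≤ l := by positivity
  have hlB : l * B ≤ 1 := by
    rw [div_mul_eq_mul_div]
    exact div_le_one_of_le₀ (by nlinarith) (by positivity)
  have hexponent : m * (l ^ 2 * B ^ 2) - l * t = -t ^ 2 / (4 * m * B ^ 2) := by
    rcases eq_or_ne (m : ℝ) 0 with hm | hm
    · simp [l, hm]
    · simp only [l]; field_simp; ring
  have hmarkov : (#{v | 𝔼 w, h w + t ≤ h v} : ℝ) * exp (l * t) ≤
      ∑ v, exp (l * (h v - 𝔼 w, h w)) := by
    rw [← nsmul_eq_mul, ← sum_const]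
    refine (sum_le_sum fun v hv ↦ exp_le_exp.2 ?_).trans
      (sum_le_sum_of_subset_of_nonneg (filter_subset _ _) fun _ _ _ ↦ (exp_pos _).le)
    exact mul_le_mul_of_nonneg_left (by linarith [(mem_filter.1 hv).2]) hl
  have hmgf : ∑ v, exp (l * (h v - 𝔼 w, h w)) ≤
      Fintype.card α ^ m * exp (m * (l ^ 2 * B ^ 2)) := by
    rw [← Fintype.card_mul_expect]
    simp only [Fintype.card_fun, Fintype.card_fin, Nat.cast_pow]
    gcongr
    calc _ ≤ (1 + l ^ 2 * B ^ 2) ^ m := hh.expect_exp_mul_sub_expect_le hl hlB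
      _ ≤ exp (l ^ 2 * B ^ 2) ^ m := by gcongr; linarith [add_one_le_exp (l ^ 2 * B ^ 2)]
      _ = exp (m * (l ^ 2 * B ^ 2)) := (exp_nat_mul _ _).symm
  rw [← hexponent, sub_eq_add_neg, exp_add, exp_neg, ← mul_assoc, ← div_eq_mul_inv,
    le_div_iff₀ (exp_pos _)]
  exact hmarkov.trans hmgf

end BoundedDifferences

section CenterMass

variable {ι E : Type*} [NormedAddCommGroup E] [NormedSpace ℝ E] {t : Finset ι} {w : ι → ℝ}
  {z : ι → E}

lemma Finset.centerMass_sub (hw : ∑ i ∈ t, w i ≠ 0) (c : E) :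
    t.centerMass w z - c = (∑ i ∈ t, w i)⁻¹ • ∑ i ∈ t, w i • (z i - c) := by
  simp only [centerMass, smul_sub, sum_sub_distrib, ← sum_smul, smul_smul, inv_mul_cancel₀ hw,
    one_smul]

lemma Finset.sum_smul_sub_centerMass (hw0 : ∀ i ∈ t, 0 ≤ w i) :
    ∑ i ∈ t, w i • (z i - t.centerMass w z) = 0 := by
  by_cases hw : ∑ i ∈ t, w i = 0
  · rw [sum_eq_zero_iff_of_nonneg hw0] at hw
    exact sum_eq_zero fun i hi ↦ by simp [hw i hi]
  · have h := t.centerMass_sub (z := z) hw (t.centerMass w z)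
    rw [sub_self, eq_comm, smul_eq_zero] at h
    exact h.resolve_left (inv_ne_zero hw)

lemma Finset.norm_centerMass_le {R : ℝ} (hR : 0 ≤ R) (hw0 : ∀ i ∈ t, 0 ≤ w i)
    (hz : ∀ i ∈ t, ‖z i‖ ≤ R) : ‖t.centerMass w z‖ ≤ R := by
  by_cases hw : ∑ i ∈ t, w i = 0
  · simp [centerMass, hw, hR]
  · simpa using (convex_closedBall (0 : E) R).centerMass_mem hw0
      ((sum_nonneg hw0).lt_of_ne' hw) (by simpa using hz)

lemma Finset.norm_centerMass_sub_le {c : E} {a ε : ℝ} (ha : 0 < a) (haw : a ≤ ∑ i ∈ t, w i)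
    (h : ‖∑ i ∈ t, w i • (z i - c)‖ ≤ ε * a) : ‖t.centerMass w z - c‖ ≤ ε := by
  have hw : 0 < ∑ i ∈ t, w i := ha.trans_le haw
  have hε : 0 ≤ ε := nonneg_of_mul_nonneg_left ((norm_nonneg _).trans h) ha
  rw [t.centerMass_sub hw.ne', norm_smul, Real.norm_of_nonneg (inv_nonneg.2 hw.le),
    inv_mul_le_iff₀ hw]
  exact h.trans (by rw [mul_comm]; exact mul_le_mul_of_nonneg_right haw hε)

end CenterMass

section InnerProductSpace

variable {E : Type*} [NormedAddCommGroup E] [InnerProductSpace ℝ E] {α : Type*} [Fintype α]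
  [Nonempty α]

lemma expect_norm_sum_sq {Y : α → E} (hY : ∑ a, Y a = 0) (m : ℕ) :
    𝔼 v : Fin m → α, ‖∑ p, Y (v p)‖ ^ 2 = m * 𝔼 a, ‖Y a‖ ^ 2 := by
  induction m with
  | zero => simp
  | succ m ih =>
    have hinner (z : E) : 𝔼 a, inner ℝ (Y a) z = 0 := by
      rw [Fintype.expect_eq_sum_div_card, ← sum_inner, hY, inner_zero_left, zero_div]
    calc 𝔼 v : Fin (m + 1) → α, ‖∑ p, Y (v p)‖ ^ 2
        = 𝔼 w : Fin m → α, 𝔼 a, (‖Y a‖ ^ 2 + 2 * inner ℝ (Y a) (∑ p, Y (w p)) +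
            ‖∑ p, Y (w p)‖ ^ 2) := by
          rw [expect_fin_cons]
          simp only [Fin.sum_univ_succ, Fin.cons_zero, Fin.cons_succ, norm_add_sq_real]
      _ = 𝔼 a, ‖Y a‖ ^ 2 + 𝔼 w : Fin m → α, ‖∑ p, Y (w p)‖ ^ 2 := by
          simp only [expect_add_distrib, ← mul_expect, hinner, mul_zero, add_zero,
            Fintype.expect_const]
      _ = (m + 1 : ℕ) * 𝔼 a, ‖Y a‖ ^ 2 := by rw [ih]; push_cast; ring

lemma card_lt_norm_sum_le {Y : α → E} {b s : ℝ} {m : ℕ} (hY : ∑ a, Y a = 0)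
    (hYb : ∀ a, ‖Y a‖ ≤ b) (hb : 0 < b) (hs : 0 ≤ s) (hms : 4 * m * b ^ 2 ≤ s ^ 2)
    (hsm : s ≤ 8 * m * b) :
    (#{v : Fin m → α | s < ‖∑ p, Y (v p)‖} : ℝ) ≤
      Fintype.card α ^ m * exp (-s ^ 2 / (64 * m * b ^ 2)) := by
  set M := 𝔼 v : Fin m → α, ‖∑ p, Y (v p)‖
  have hM : M ≤ s / 2 := by
    have hM0 : 0 ≤ M := expect_nonneg fun _ _ ↦ norm_nonneg _
    have hsq : M ^ 2 ≤ m * b ^ 2 := by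
      calc M ^ 2 ≤ 𝔼 v : Fin m → α, ‖∑ p, Y (v p)‖ ^ 2 := by
            simpa [M] using
              expect_mul_sq_le_sq_mul_sq univ (fun v : Fin m → α ↦ ‖∑ p, Y (v p)‖) 1
        _ = m * 𝔼 a, ‖Y a‖ ^ 2 := expect_norm_sum_sq hY m
        _ ≤ m * b ^ 2 := by
            gcongr
            exact expect_le univ_nonempty fun a _ ↦ pow_le_pow_left₀ (norm_nonneg _) (hYb a) 2
    nlinarith
  calc _ ≤ (#{v : Fin m → α | M + s / 2 ≤ ‖∑ p, Y (v p)‖} : ℝ) := by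
        gcongr with v
        intro hv
        linarith
    _ ≤ Fintype.card α ^ m * exp (-(s / 2) ^ 2 / (4 * m * (2 * b) ^ 2)) :=
        (boundedDifferences_norm_sum hYb).card_upper_tail_le (by positivity) (by positivity)
          (by linarith)
    _ = Fintype.card α ^ m * exp (-s ^ 2 / (64 * m * b ^ 2)) := by ring_nf

lemma card_lt_norm_sum_smul_sub_centerMass_le {w : α → ℝ} {x : α → E} {R s : ℝ} {m : ℕ}
    (hw0 : ∀ a, 0 ≤ w a) (hw1 : ∀ a, w a ≤ 1) (hR : 0 < R) (hx : ∀ a, ‖x a‖ ≤ R) (hs : 0 ≤ s)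
    (hms : 16 * m * R ^ 2 ≤ s ^ 2) (hsm : s ≤ 16 * m * R) :
    (#{v : Fin m → α | s < ‖∑ p, w (v p) • (x (v p) - univ.centerMass w x)‖} : ℝ) ≤
      Fintype.card α ^ m * exp (-s ^ 2 / (256 * m * R ^ 2)) := by
  have hc : ‖univ.centerMass w x‖ ≤ R :=
    norm_centerMass_le hR.le (fun a _ ↦ hw0 a) fun a _ ↦ hx a
  have hY (a : α) : ‖w a • (x a - univ.centerMass w x)‖ ≤ 2 * R := by
    rw [norm_smul, Real.norm_of_nonneg (hw0 a)]
    calc _ ≤ 1 * (‖x a‖ + ‖univ.centerMass w x‖) :=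
          mul_le_mul (hw1 a) (norm_sub_le _ _) (norm_nonneg _) zero_le_one
      _ ≤ 2 * R := by linarith [hx a]
  convert card_lt_norm_sum_le (sum_smul_sub_centerMass fun a _ ↦ hw0 a) hY (by positivity) hs
    (by linarith) (by linarith) using 3
  ring

end InnerProductSpace

lemma card_div_rpow_le_sum_rpow {ι κ : Type*} [Fintype ι] [Fintype κ] {r : ι → κ → ℝ} {α : ℝ}
    (hα : 1 ≤ α) (hr0 : ∀ i j, 0 ≤ r i j) (hr1 : ∀ i, ∑ j, r i j = 1) {t : κ}
    (ht : ∀ j, ∑ i, r i j ^ α ≤ ∑ i, r i t ^ α) :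
    Fintype.card ι / (Fintype.card κ : ℝ) ^ α ≤ ∑ i, r i t ^ α := by
  have hκ : (0 : ℝ) < Fintype.card κ := by exact_mod_cast Fintype.card_pos_iff.2 ⟨t⟩
  have hrow (i : ι) : 1 ≤ (Fintype.card κ : ℝ) ^ (α - 1) * ∑ j, r i j ^ α := by
    simpa [hr1 i] using
      rpow_sum_le_const_mul_sum_rpow_of_nonneg univ hα fun j _ ↦ hr0 i j
  rw [div_le_iff₀ (by positivity)]
  calc (Fintype.card ι : ℝ) ≤ ∑ i, (Fintype.card κ : ℝ) ^ (α - 1) * ∑ j, r i j ^ α := by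
        simpa using sum_le_sum fun i (_ : i ∈ univ) ↦ hrow i
    _ = (Fintype.card κ : ℝ) ^ (α - 1) * ∑ j, ∑ i, r i j ^ α := by rw [← mul_sum, sum_comm]
    _ ≤ (Fintype.card κ : ℝ) ^ (α - 1) * (Fintype.card κ * ∑ i, r i t ^ α) := by
        gcongr
        simpa using sum_le_sum fun j (_ : j ∈ univ) ↦ ht j
    _ = (∑ i, r i t ^ α) * (Fintype.card κ : ℝ) ^ α := by
        rw [← mul_assoc, ← rpow_add_one hκ.ne', sub_add_cancel, mul_comm]

lemma measure_sample_mem_le {Ω ι α : Type*} [MeasurableSpace Ω] [Fintype ι] {P : Measure Ω}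
    {I : ι → Ω → α} (hI : iIndepFun (m := fun _ ↦ (⊤ : MeasurableSpace α)) I P) {q : ENNReal}
    (hq : ∀ i a, P {ω | I i ω = a} = q) (S : Finset (ι → α)) :
    P {ω | (fun i ↦ I i ω) ∈ S} ≤ #S * q ^ Fintype.card ι := by
  have hatom (v : ι → α) : P (⋂ i ∈ univ, I i ⁻¹' {v i}) = q ^ Fintype.card ι := by
    rw [hI.measure_inter_preimage_eq_mul univ fun _ _ ↦ MeasurableSpace.measurableSet_top]
    simp [Set.preimage, hq]
  calc P {ω | (fun i ↦ I i ω) ∈ S} ≤ P (⋃ v ∈ S, ⋂ i ∈ univ, I i ⁻¹' {v i}) :=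
        measure_mono fun ω hω ↦ Set.mem_biUnion hω (by simp)
    _ ≤ ∑ v ∈ S, P (⋂ i ∈ univ, I i ⁻¹' {v i}) := measure_biUnion_finset_le _ _
    _ = #S * q ^ Fintype.card ι := by simp only [hatom, sum_const, nsmul_eq_mul]

lemma ofReal_one_sub_le_measure {Ω : Type*} [MeasurableSpace Ω] {P : Measure Ω}
    [IsProbabilityMeasure P] {G B : Set Ω} {δ : ℝ} (hδ : 0 ≤ δ) (hGB : Gᶜ ⊆ B)
    (hB : P B ≤ ENNReal.ofReal δ) : ENNReal.ofReal (1 - δ) ≤ P G := by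
  rw [ENNReal.ofReal_sub _ hδ, ENNReal.ofReal_one, tsub_le_iff_right]
  calc 1 = P (G ∪ Gᶜ) := by simp
    _ ≤ P G + P Gᶜ := measure_union_le _ _
    _ ≤ P G + ENNReal.ofReal δ := by gcongr; exact (measure_mono hGB).trans hB

lemma measure_sample_mem_le_ofReal {Ω ι α : Type*} [MeasurableSpace Ω] [Fintype ι] [Fintype α]
    [Nonempty α] {P : Measure Ω} {I : ι → Ω → α}
    (hI : iIndepFun (m := fun _ ↦ (⊤ : MeasurableSpace α)) I P)
    (hunif : ∀ i a, P {ω | I i ω = a} = 1 / (Fintype.card α : ENNReal)) {S : Finset (ι → α)}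
    {δ : ℝ} (hS : (#S : ℝ) ≤ δ * Fintype.card α ^ Fintype.card ι) :
    P {ω | (fun i ↦ I i ω) ∈ S} ≤ ENNReal.ofReal δ := by
  refine (measure_sample_mem_le hI hunif S).trans ?_
  rw [one_div, ← ENNReal.inv_pow, ← div_eq_mul_inv,
    ENNReal.div_le_iff (by simp [Fintype.card_ne_zero]) (by simp), ← ENNReal.ofReal_natCast,
    show (Fintype.card α : ENNReal) ^ Fintype.card ι =
      ENNReal.ofReal ((Fintype.card α : ℝ) ^ Fintype.card ι) by simp,
    ← ENNReal.ofReal_mul' (by positivity)]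
  exact ENNReal.ofReal_le_ofReal hS

lemma ofReal_one_sub_le_measure_forall_norm_sum_le {Ω α κ E : Type*} [MeasurableSpace Ω]
    [Fintype α] [Nonempty α] [Fintype κ] [NormedAddCommGroup E] [InnerProductSpace ℝ E]
    {P : Measure Ω} [IsProbabilityMeasure P] {m : ℕ} {I : Fin m → Ω → α}
    (hI : iIndepFun (m := fun _ ↦ (⊤ : MeasurableSpace α)) I P)
    (hunif : ∀ p a, P {ω | I p ω = a} = 1 / (Fintype.card α : ENNReal)) {w : α → κ → ℝ}
    {x : α → E} {R s δ : ℝ} (hw0 : ∀ a j, 0 ≤ w a j) (hw1 : ∀ a j, w a j ≤ 1) (hR : 0 < R)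
    (hx : ∀ a, ‖x a‖ ≤ R) (hs : 0 ≤ s) (hms : 16 * m * R ^ 2 ≤ s ^ 2) (hsm : s ≤ 16 * m * R)
    (hδ : Fintype.card κ * exp (-s ^ 2 / (256 * m * R ^ 2)) ≤ δ) :
    ENNReal.ofReal (1 - δ) ≤ P {ω | ∀ j,
      ‖∑ p, w (I p ω) j • (x (I p ω) - univ.centerMass (w · j) x)‖ ≤ s} := by
  classical
  set S : Finset (Fin m → α) := univ.biUnion fun j ↦
    {v | s < ‖∑ p, w (v p) j • (x (v p) - univ.centerMass (w · j) x)‖}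
  have hS : (#S : ℝ) ≤ δ * Fintype.card α ^ Fintype.card (Fin m) := by
    calc (#S : ℝ) ≤ ∑ j : κ, (Fintype.card α : ℝ) ^ m * exp (-s ^ 2 / (256 * m * R ^ 2)) := by
          refine (Nat.cast_le.2 card_biUnion_le).trans ?_
          push_cast
          exact sum_le_sum fun j _ ↦ card_lt_norm_sum_smul_sub_centerMass_le (w := (w · j))
            (x := x) (hw0 · j) (hw1 · j) hR hx hs hms hsm
      _ ≤ δ * Fintype.card α ^ Fintype.card (Fin m) := by
          rw [sum_const, card_univ, nsmul_eq_mul, Fintype.card_fin, mul_left_comm, mul_comm δ]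
          gcongr
  refine ofReal_one_sub_le_measure (hδ.trans' (by positivity)) (fun ω hω ↦ ?_)
    (measure_sample_mem_le_ofReal hI hunif hS)
  obtain ⟨j, hj⟩ : ∃ j, s < ‖∑ p, w (I p ω) j • (x (I p ω) - univ.centerMass (w · j) x)‖ := by
    simpa using hω
  exact mem_biUnion.2 ⟨j, mem_univ _, mem_filter.2 ⟨mem_univ _, hj⟩⟩

lemma sum_pos_of_sum_comp_pos {ι κ : Type*} [Fintype ι] [Fintype κ] {w : ι → ℝ}
    (hw : ∀ i, 0 ≤ w i) {v : κ → ι} (h : 0 < ∑ p, w (v p)) : 0 < ∑ i, w i := by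
  refine (sum_nonneg fun i _ ↦ hw i).lt_of_ne' fun h0 ↦ h.ne' ?_
  rw [sum_eq_zero_iff_of_nonneg fun i _ ↦ hw i] at h0
  simp [h0]

lemma sample_size_bounds {R ε δ K : ℝ} {k m : ℕ} (hR : 0 < R) (hε : 0 < ε) (hεR : ε ≤ R)
    (hK : 1 ≤ K) (hk : 1 ≤ k) (hδ : 0 < δ) (hδ2 : δ < 1 / 2)
    (hm : 256 * R ^ 4 * K ^ 4 * ε⁻¹ ^ 4 * log (2 * k / δ) ≤ m) :
    0 < (m : ℝ) ∧ 16 * m * R ^ 2 ≤ (ε * m / K) ^ 2 ∧ ε * m / K ≤ 16 * m * R ∧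
      k * exp (-(ε * m / K) ^ 2 / (256 * m * R ^ 2)) ≤ δ := by
  have hk' : (1 : ℝ) ≤ k := by exact_mod_cast hk
  have hratio : 4 ≤ 2 * k / δ := by rw [le_div_iff₀ hδ]; linarith
  set L := log (2 * k / δ)
  have hL : 1 ≤ L := by
    rw [le_log_iff_exp_le (by linarith)]; linarith [exp_one_lt_d9]
  have hkey : 256 * R ^ 2 * K ^ 2 * L ≤ ε ^ 2 * m := by
    have hRε : 1 ≤ (R / ε) ^ 2 * K ^ 2 := one_le_mul_of_one_le_of_one_le
      (one_le_pow₀ ((one_le_div hε).2 hεR)) (one_le_pow₀ hK)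
    calc 256 * R ^ 2 * K ^ 2 * L ≤ 256 * R ^ 2 * K ^ 2 * L * ((R / ε) ^ 2 * K ^ 2) :=
          le_mul_of_one_le_right (by positivity) hRε
      _ = ε ^ 2 * (256 * R ^ 4 * K ^ 4 * ε⁻¹ ^ 4 * L) := by field_simp
      _ ≤ ε ^ 2 * m := by gcongr
  have hm0 : 0 < (m : ℝ) := pos_of_mul_pos_right ((by positivity : (0 : ℝ) < _).trans_le hkey)
    (sq_nonneg ε)
  have hK0 : 0 < K := by linarith
  refine ⟨hm0, ?_, ?_, ?_⟩
  · rw [div_pow, le_div_iff₀ (by positivity)]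
    nlinarith
  · calc ε * m / K ≤ ε * m := div_le_self (by positivity) hK
      _ ≤ 16 * m * R := by nlinarith
  · have hexp : exp (-(ε * m / K) ^ 2 / (256 * m * R ^ 2)) ≤ exp (-L) := by
      gcongr
      rw [neg_div, neg_le_neg_iff, le_div_iff₀ (by positivity), div_pow]
      rw [le_div_iff₀ (by positivity)]
      nlinarith
    rw [exp_neg, exp_log (by linarith), inv_div] at hexp
    calc (k : ℝ) * exp _ ≤ k * (δ / (2 * k)) := by gcongr
      _ ≤ δ := by field_simp; linarith

/-- Guarantees on the empirically largest cluster (Lemma 6 / Corollary 1 of the paper):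
there is an absolute constant `c > 0` such that, with a uniform sample of size
`m ≥ c R⁴ k^{4α} ε⁻⁴ log(2k/δ)`, any sample-argmax cluster `t₁` has sampled α-power
membership at least `m/k^α > 0`, and with probability at least `1 - δ` its
self-normalized center estimate is within `ε` of the true center `μ_{t₁}`. -/
theorem largest_cluster_mean_estimate :
    ∃ c : ℝ, 0 < c ∧
      ∀ (d n k : ℕ), 1 ≤ d → 1 ≤ n → 1 ≤ k →
      ∀ (R α δ ε : ℝ), 0 < R → 1 ≤ α →
        δ ∈ Set.Ioo (0 : ℝ) (1 / 2) → ε ∈ Set.Ioc (0 : ℝ) R →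
      ∀ (x : Fin n → EuclideanSpace ℝ (Fin d)),
        (∀ i, x i ∈ Metric.closedBall (0 : EuclideanSpace ℝ (Fin d)) R) →
      ∀ (U : Fin n → Fin k → ℝ),
        (∀ i j, U i j ∈ Set.Icc (0 : ℝ) 1) →
        (∀ i, ∑ j, U i j = 1) →
      ∀ m : ℕ,
        c * R ^ 4 * (k : ℝ) ^ (4 * α) * ε⁻¹ ^ 4 * Real.log (2 * k / δ) ≤ (m : ℝ) →
      ∀ (Ω : Type) (_ : MeasurableSpace Ω) (P : Measure Ω),
        IsProbabilityMeasure P →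
      ∀ I : Fin m → Ω → Fin n,
        iIndepFun (m := fun _ => (⊤ : MeasurableSpace (Fin n))) I P →
        (∀ (p : Fin m) (i : Fin n), P {ω | I p ω = i} = 1 / (n : ENNReal)) →
      ∀ t₁ : Ω → Fin k,
        (∀ (ω : Ω) (j : Fin k),
          ∑ p, U (I p ω) j ^ α ≤ ∑ p, U (I p ω) (t₁ ω) ^ α) →
      (∀ ω : Ω, (m : ℝ) / (k : ℝ) ^ α ≤ ∑ p, U (I p ω) (t₁ ω) ^ α ∧
          0 < (m : ℝ) / (k : ℝ) ^ α) ∧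
      ENNReal.ofReal (1 - δ) ≤
        P {ω | 0 < ∑ i, U i (t₁ ω) ^ α ∧
          ‖((∑ p, U (I p ω) (t₁ ω) ^ α)⁻¹ • ∑ p, (U (I p ω) (t₁ ω) ^ α) • x (I p ω)) -
            ((∑ i, U i (t₁ ω) ^ α)⁻¹ • ∑ i, (U i (t₁ ω) ^ α) • x i)‖ ≤ ε} := by
  refine ⟨256, by norm_num, ?_⟩
  intro d n k _ hn hk R α δ ε hR hα ⟨hδ0, hδ2⟩ ⟨hε0, hεR⟩ x hx U hU hUrow m hm Ω _ P _ I hI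
    hunif t₁ ht₁
  have hK : 1 ≤ (k : ℝ) ^ α := one_le_rpow (by exact_mod_cast hk) (by linarith)
  have hk4 : (k : ℝ) ^ (4 * α) = ((k : ℝ) ^ α) ^ 4 := by
    rw [mul_comm, rpow_mul (Nat.cast_nonneg k)]; norm_cast
  obtain ⟨hm0, hms, hsm, hδk⟩ :=
    sample_size_bounds (m := m) hR hε0 hεR hK hk hδ0 hδ2 (hk4 ▸ hm)
  have hlarge (ω : Ω) : (m : ℝ) / (k : ℝ) ^ α ≤ ∑ p, U (I p ω) (t₁ ω) ^ α := by
    simpa using card_div_rpow_le_sum_rpow hα (fun p j ↦ (hU (I p ω) j).1)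
      (fun p ↦ hUrow (I p ω)) (ht₁ ω)
  have hpos : 0 < (m : ℝ) / (k : ℝ) ^ α := by positivity
  refine ⟨fun ω ↦ ⟨hlarge ω, hpos⟩, ?_⟩
  have : Nonempty (Fin n) := ⟨⟨0, hn⟩⟩
  have hw0 (i j) : 0 ≤ U i j ^ α := rpow_nonneg (hU i j).1 α
  -- both estimators in the statement are `Finset.centerMass`, unfolded
  refine (ofReal_one_sub_le_measure_forall_norm_sum_le hI (by simpa using hunif) hw0
    (fun i j ↦ rpow_le_one (hU i j).1 (hU i j).2 (by linarith)) hR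
    (fun i ↦ mem_closedBall_zero_iff.1 (hx i)) (by positivity) hms hsm (by simpa using hδk)).trans
    (measure_mono fun ω hω ↦ ⟨sum_pos_of_sum_comp_pos (hw0 · (t₁ ω)) (hpos.trans_le (hlarge ω)),
      norm_centerMass_sub_le hpos (hlarge ω) ?_⟩)
  rw [← mul_div_assoc]
  exact hω (t₁ ω)
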